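/- arXiv:2401.08507 — 7 statements merged into one kernel-verified Lean document; each statement's English description precedes it below -/
import Mathlib

section
/- For relatively prime positive integers a and b, the number of lattice points (x,y) with x > 0, y > 0, and a*x + b*y < a*b equals (a-1)*(b-1)/2. -/
theorem stmt_2 (a b : ℕ) (ha : 2 ≤ a) (hb : 2 ≤ b) (hgcd : Nat.gcd a b = 1) :
    {p : ℤ × ℤ | 0 < p.1 ∧ 0 < p.2 ∧ a * p.1 + b * p.2 < a * b}.ncard
      = (a - 1) * (b - 1) / 2 := by
  have ha' : (2 : ℤ) ≤ a := by exact_mod_cast ha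
  have hb' : (2 : ℤ) ≤ b := by exact_mod_cast hb
  set P : Finset (ℤ × ℤ) := Finset.Ioo 0 (b : ℤ) ×ˢ Finset.Ioo 0 (a : ℤ) with hP
  set T : Finset (ℤ × ℤ) := P.filter (fun p => (a : ℤ) * p.1 + b * p.2 < a * b) with hT
  -- the set equals the finset
  have hset : {p : ℤ × ℤ | 0 < p.1 ∧ 0 < p.2 ∧ (a:ℤ) * p.1 + b * p.2 < a * b} = ↑T := by
    ext ⟨x, y⟩
    simp only [Set.mem_setOf_eq, hT, hP, Finset.coe_filter, Finset.mem_product,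
      Finset.mem_Ioo, Set.mem_setOf_eq]
    constructor
    · rintro ⟨hx, hy, hlt⟩
      refine ⟨⟨⟨hx, ?_⟩, ⟨hy, ?_⟩⟩, hlt⟩
      · nlinarith
      · nlinarith
    · rintro ⟨⟨⟨hx, _⟩, ⟨hy, _⟩⟩, hlt⟩
      exact ⟨hx, hy, hlt⟩
  rw [hset, Set.ncard_coe_finset]
  -- key fact: equality never holds
  have hne : ∀ x y : ℤ, 0 < x → x < b → (a:ℤ) * x + b * y ≠ a * b := by
    intro x y hx hxb heq
    have hcop : IsCoprime (b : ℤ) (a : ℤ) :=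
      Int.isCoprime_iff_gcd_eq_one.mpr (by simpa [Int.gcd, Nat.gcd_comm] using hgcd)
    have hdvd : (b : ℤ) ∣ a * x := ⟨a - y, by linarith⟩
    have := hcop.dvd_of_dvd_mul_left hdvd
    have := Int.le_of_dvd hx this
    linarith
  -- complement filter
  set Tc : Finset (ℤ × ℤ) := P.filter (fun p => ¬ ((a : ℤ) * p.1 + b * p.2 < a * b)) with hTc
  have hsum : T.card + Tc.card = P.card := Finset.card_filter_add_card_filter_not _
  have hcardP : P.card = (b - 1) * (a - 1) := by
    rw [hP, Finset.card_product, Int.card_Ioo, Int.card_Ioo]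
    rw [show ((b:ℤ) - 0 - 1).toNat = b - 1 by omega, show ((a:ℤ) - 0 - 1).toNat = a - 1 by omega]
  have hbij : T.card = Tc.card := by
    apply Finset.card_bij' (fun p _ => ((b : ℤ) - p.1, (a : ℤ) - p.2))
      (fun p _ => ((b : ℤ) - p.1, (a : ℤ) - p.2))
    · intro ⟨x, y⟩ hp
      simp only [hT, hP, Finset.mem_filter, Finset.mem_product, Finset.mem_Ioo] at hp
      obtain ⟨⟨⟨hx, hxb⟩, hy, hya⟩, hlt⟩ := hp
      simp only [hTc, hP, Finset.mem_filter, Finset.mem_product, Finset.mem_Ioo, not_lt]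
      refine ⟨⟨⟨by linarith, by linarith⟩, by linarith, by linarith⟩, by nlinarith⟩
    · intro ⟨x, y⟩ hp
      simp only [hTc, hP, Finset.mem_filter, Finset.mem_product, Finset.mem_Ioo, not_lt] at hp
      obtain ⟨⟨⟨hx, hxb⟩, hy, hya⟩, hge⟩ := hp
      have hne' := hne x y hx hxb
      have hgt : (a:ℤ) * b < a * x + b * y := lt_of_le_of_ne hge (Ne.symm hne')
      simp only [hT, hP, Finset.mem_filter, Finset.mem_product, Finset.mem_Ioo]
      refine ⟨⟨⟨by linarith, by linarith⟩, by linarith, by linarith⟩, by nlinarith⟩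
    · intro p _; simp
    · intro p _; simp
  have h2 : 2 * T.card = (a - 1) * (b - 1) := by
    rw [hbij] at hsum
    rw [Nat.mul_comm (a-1)]
    omega
  omega
end

section
/- For relatively prime positive integers a and b, the number of lattice points (x,y) with 0 < x < b, -(a) < y < 0, and 0 < a*x + b*y < a*b equals (a-1)*(b-1)/2. -/
theorem stmt_3 (a b : ℕ) (ha : 2 ≤ a) (hb : 2 ≤ b) (hgcd : Nat.gcd a b = 1) :
    {p : ℤ × ℤ | 0 < p.1 ∧ p.1 < b ∧ -(a : ℤ) < p.2 ∧ p.2 < 0 ∧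
      0 < a * p.1 + b * p.2 ∧ a * p.1 + b * p.2 < a * b}.ncard
      = (a - 1) * (b - 1) / 2 := by
  have ha' : (2:ℤ) ≤ a := by exact_mod_cast ha
  have hb' : (2:ℤ) ≤ b := by exact_mod_cast hb
  set B : Finset (ℤ × ℤ) := (Finset.Ioo (0:ℤ) b) ×ˢ (Finset.Ioo (-(a:ℤ)) 0) with hB
  set S : Finset (ℤ × ℤ) := B.filter (fun p => 0 < (a:ℤ) * p.1 + b * p.2) with hSdef
  have hmemB : ∀ p : ℤ × ℤ, p ∈ B ↔ (0 < p.1 ∧ p.1 < b ∧ -(a:ℤ) < p.2 ∧ p.2 < 0) := by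
    intro p
    simp [hB, Finset.mem_product, Finset.mem_Ioo, and_assoc]
  -- nonzero lemma
  have hcop : IsCoprime (a:ℤ) (b:ℤ) := by
    rw [Int.isCoprime_iff_gcd_eq_one]
    exact_mod_cast hgcd
  have hne : ∀ p : ℤ × ℤ, p ∈ B → (a:ℤ) * p.1 + b * p.2 ≠ 0 := by
    intro p hp h0
    rw [hmemB] at hp
    obtain ⟨h1, h2, h3, h4⟩ := hp
    have hdvd : (b:ℤ) ∣ (a:ℤ) * p.1 := ⟨-p.2, by linarith⟩
    have hdx : (b:ℤ) ∣ p.1 := (hcop.symm).dvd_of_dvd_mul_left hdvd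
    have := Int.le_of_dvd h1 hdx
    linarith
  -- the set equals ↑S
  have hset : {p : ℤ × ℤ | 0 < p.1 ∧ p.1 < b ∧ -(a : ℤ) < p.2 ∧ p.2 < 0 ∧
      0 < a * p.1 + b * p.2 ∧ a * p.1 + b * p.2 < a * b} = ↑S := by
    ext p
    simp only [Set.mem_setOf_eq, hSdef, Finset.coe_filter, Set.mem_setOf_eq, hmemB]
    constructor
    · rintro ⟨h1, h2, h3, h4, h5, h6⟩
      exact ⟨⟨h1, h2, h3, h4⟩, h5⟩
    · rintro ⟨⟨h1, h2, h3, h4⟩, h5⟩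
      refine ⟨h1, h2, h3, h4, h5, ?_⟩
      nlinarith
  rw [hset, Set.ncard_coe_finset]
  -- involution
  have hSsub : S ⊆ B := Finset.filter_subset _ _
  have hcard : S.card = (B \ S).card := by
    apply Finset.card_bij' (fun p _ => ((b:ℤ) - p.1, -(a:ℤ) - p.2))
      (fun p _ => ((b:ℤ) - p.1, -(a:ℤ) - p.2))
    · intro p hp
      simp only [hSdef, Finset.mem_filter, hmemB] at hp
      obtain ⟨⟨h1, h2, h3, h4⟩, h5⟩ := hp
      rw [Finset.mem_sdiff, hmemB]
      constructor
      · constructor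
        · simp; linarith
        constructor
        · simp; linarith
        constructor
        · simp; linarith
        · simp; linarith
      · simp only [hSdef, Finset.mem_filter, not_and]
        intro _ hc
        nlinarith
    · intro p hp
      rw [Finset.mem_sdiff] at hp
      obtain ⟨hpB, hpS⟩ := hp
      have hns : ¬ (0 < (a:ℤ) * p.1 + b * p.2) := by
        intro hc
        exact hpS (Finset.mem_filter.2 ⟨hpB, hc⟩)
      have hneg : (a:ℤ) * p.1 + b * p.2 < 0 :=
        lt_of_le_of_ne (not_lt.1 hns) (hne p hpB)
      rw [hmemB] at hpB
      obtain ⟨h1, h2, h3, h4⟩ := hpB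
      simp only [hSdef, Finset.mem_filter, hmemB]
      constructor
      · constructor
        · simp; linarith
        constructor
        · simp; linarith
        constructor
        · simp; linarith
        · simp; linarith
      · nlinarith
    · intro p _
      simp
    · intro p _
      simp
  have hScard2 : 2 * S.card = B.card := by
    have := Finset.card_sdiff_add_card_eq_card hSsub
    omega
  have hBcard : B.card = (a - 1) * (b - 1) := by
    rw [hB, Finset.card_product, Int.card_Ioo, Int.card_Ioo]
    have h1 : ((b:ℤ) - 0 - 1).toNat = b - 1 := by omega
    have h2 : ((0:ℤ) - (-(a:ℤ)) - 1).toNat = a - 1 := by omega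
    rw [h1, h2, mul_comm]
  rw [hBcard] at hScard2
  have heven : 2 ∣ (a - 1) * (b - 1) := ⟨S.card, hScard2.symm⟩
  omega
end

section
/- Let a and b be relatively prime positive integers. Every positive integer c with 0 < c < a*b that is divisible by neither a nor b is representable either as c = a*x + b*y with integers x, y > 0, or as c = a*b - a*x - b*y with integers x, y > 0, but not both. -/
theorem stmt_5 (a b : ℕ) (ha : 0 < a) (hb : 0 < b) (hgcd : Nat.gcd a b = 1)
    (c : ℕ) (hc0 : 0 < c) (hcab : c < a * b) (hna : ¬ a ∣ c) (hnb : ¬ b ∣ c) :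
    Xor' (∃ x y : ℤ, 0 < x ∧ 0 < y ∧ (c : ℤ) = a * x + b * y)
         (∃ x y : ℤ, 0 < x ∧ 0 < y ∧ (c : ℤ) = a * b - a * x - b * y) := by
  have ha' : (0 : ℤ) < a := by exact_mod_cast ha
  have hb' : (0 : ℤ) < b := by exact_mod_cast hb
  have hco : IsCoprime (a : ℤ) (b : ℤ) := by
    rw [Int.isCoprime_iff_gcd_eq_one]
    simpa using hgcd
  -- exclusivity
  have hboth : ¬ ((∃ x y : ℤ, 0 < x ∧ 0 < y ∧ (c : ℤ) = a * x + b * y) ∧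
      (∃ x y : ℤ, 0 < x ∧ 0 < y ∧ (c : ℤ) = a * b - a * x - b * y)) := by
    rintro ⟨⟨x1, y1, hx1, hy1, h1⟩, ⟨x2, y2, hx2, hy2, h2⟩⟩
    have hsum : (a : ℤ) * (x1 + x2) + b * (y1 + y2) = a * b := by linarith
    have hda : (a : ℤ) ∣ b * (y1 + y2) := ⟨b - (x1 + x2), by linarith [hsum]⟩
    have hdb : (b : ℤ) ∣ a * (x1 + x2) := ⟨a - (y1 + y2), by linarith [hsum]⟩
    have h1' : (a : ℤ) ∣ y1 + y2 := hco.dvd_of_dvd_mul_left hda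
    have h2' : (b : ℤ) ∣ x1 + x2 := hco.symm.dvd_of_dvd_mul_left hdb
    have l1 : (a : ℤ) ≤ y1 + y2 := Int.le_of_dvd (by linarith) h1'
    have l2 : (b : ℤ) ≤ x1 + x2 := Int.le_of_dvd (by linarith) h2'
    nlinarith
  -- existence
  have hor : (∃ x y : ℤ, 0 < x ∧ 0 < y ∧ (c : ℤ) = a * x + b * y) ∨
      (∃ x y : ℤ, 0 < x ∧ 0 < y ∧ (c : ℤ) = a * b - a * x - b * y) := by
    obtain ⟨u, v, huv⟩ := hco
    set x : ℤ := (u * c) % b with hxdef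
    have hx0 : 0 ≤ x := Int.emod_nonneg _ (ne_of_gt hb')
    have hxlt : x < b := Int.emod_lt_of_pos _ hb'
    have key : (c : ℤ) - a * x = b * (c * v + a * ((u * c) / b)) := by
      have hx : x = u * c - b * ((u * c) / b) := Int.emod_def _ _
      rw [hx]; linear_combination (-(c : ℤ)) * huv
    set y : ℤ := c * v + a * ((u * c) / b) with hydef
    have hcxy : (c : ℤ) = a * x + b * y := by linarith [key]
    have hxpos : 0 < x := by
      rcases hx0.lt_or_eq with h | h
      · exact h
      · exfalso
        apply hnb
        have : (b : ℤ) ∣ (c : ℤ) := ⟨y, by rw [hcxy, ← h]; ring⟩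
        exact_mod_cast this
    have hyne : y ≠ 0 := by
      intro h
      apply hna
      have : (a : ℤ) ∣ (c : ℤ) := ⟨x, by rw [hcxy, h]; ring⟩
      exact_mod_cast this
    rcases lt_or_gt_of_ne hyne with hneg | hpos
    · right
      refine ⟨b - x, -y, by linarith, by linarith, by push_cast; linarith⟩
    · left
      exact ⟨x, y, hxpos, hpos, hcxy⟩
  rcases hor with hP | hQ
  · exact Or.inl ⟨hP, fun hQ => hboth ⟨hP, hQ⟩⟩
  · exact Or.inr ⟨hQ, fun hP => hboth ⟨hP, hQ⟩⟩
end

section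
/- Let a, b, c, h, l, m₀, n₀ be positive integers with gcd(a,b)=1, c = l*b - h*a > 0. If l*m₀ + h*n₀ > a*h and 0 < a*b - m₀*a - n₀*b, then a*b - m₀*a - n₀*b is not representable as a nonnegative integer combination of a, b, c. -/
theorem stmt_13 (a b c h l m₀ n₀ : ℕ)
    (ha : 0 < a) (hb : 0 < b) (hc : 0 < c) (hh : 0 < h) (hl : 0 < l)
    (hm : 0 < m₀) (hn : 0 < n₀) (hgcd : Nat.gcd a b = 1)
    (hcval : (c : ℤ) = l * b - h * a)
    (hbig : a * h < l * m₀ + h * n₀)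
    (hpos : 0 < (a : ℤ) * b - m₀ * a - n₀ * b) :
    ¬ ∃ c₁ c₂ c₃ : ℕ,
      (a : ℤ) * b - m₀ * a - n₀ * b = c₁ * a + c₂ * b + c₃ * c := by
  rintro ⟨c₁, c₂, c₃, heq⟩
  set M : ℤ := (m₀ : ℤ) + c₁ - c₃ * h with hM
  set N : ℤ := (n₀ : ℤ) + c₂ + c₃ * l with hN
  have hab : (a : ℤ) * b = M * a + N * b := by
    rw [hM, hN]; linear_combination heq + (c₃ : ℤ) * hcval
  have hNpos : 0 < N := by
    rw [hN]; positivity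
  have hdvd : (a : ℤ) ∣ N := by
    have h1 : (a : ℤ) ∣ N * b := ⟨b - M, by linarith [hab, mul_comm (M:ℤ) (a:ℤ)] ⟩
    have hcop : IsCoprime (a : ℤ) (b : ℤ) := by
      rw [Int.isCoprime_iff_gcd_eq_one]; exact_mod_cast hgcd
    exact hcop.dvd_of_dvd_mul_right h1
  have hNa : (a : ℤ) ≤ N := Int.le_of_dvd hNpos hdvd
  have hcZ : (0:ℤ) < c := by exact_mod_cast hc
  have haZ : (0:ℤ) < a := by exact_mod_cast ha
  have hNc : (a:ℤ) * c ≤ N * c := mul_le_mul_of_nonneg_right hNa hcZ.le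
  have keyeq : (a:ℤ) * (l * M + h * N) = l * a * b - N * c := by
    linear_combination -(l:ℤ) * hab + N * hcval
  have keyeq2 : (a:ℤ) * (a * h) = l * a * b - a * c := by
    linear_combination (a:ℤ) * hcval
  have key : (a:ℤ) * (l * M + h * N) ≤ a * (a * h) := by
    rw [keyeq, keyeq2]; linarith
  have key2 : (l:ℤ) * M + h * N ≤ a * h := le_of_mul_le_mul_left key haZ
  have hbigZ : (a:ℤ)*h < l * m₀ + h * n₀ := by exact_mod_cast hbig
  have hc1 : (0:ℤ) ≤ (c₁:ℤ) := Int.natCast_nonneg _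
  have hc2 : (0:ℤ) ≤ (c₂:ℤ) := Int.natCast_nonneg _
  have hlZ : (0:ℤ) < l := by exact_mod_cast hl
  have hhZ : (0:ℤ) < h := by exact_mod_cast hh
  rw [hM, hN] at key2
  nlinarith [mul_nonneg hlZ.le hc1, mul_nonneg hhZ.le hc2]
end

section
/- Let a, l, h, q, r be positive integers with a = q*l + r, 0 ≤ r < l, l ≥ 2, and l divides h. Then setting (m₀, n₀) = ((q-1)*h + 1, r + 1), there are no nonnegative integers c₁, c₂, c₃ satisfying c₁ - h*c₃ = -m₀ and c₂ + l*c₃ = a - n₀. -/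
theorem stmt_15 (a l h q : ℕ) (r : ℕ) (ha : 0 < a) (hl : 2 ≤ l) (hh : 0 < h)
    (hq : 0 < q) (hr : r < l) (haval : a = q * l + r) (hdvd : l ∣ h) :
    ¬ ∃ c₁ c₂ c₃ : ℤ, 0 ≤ c₁ ∧ 0 ≤ c₂ ∧ 0 ≤ c₃ ∧
      c₁ - h * c₃ = -(((q - 1) * h + 1 : ℕ) : ℤ) ∧
      c₂ + l * c₃ = (a : ℤ) - ((r + 1 : ℕ) : ℤ) := by
  rintro ⟨c₁, c₂, c₃, h1, h2, h3, h4, h5⟩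
  obtain ⟨Q, rfl⟩ : ∃ Q, q = Q + 1 := ⟨q - 1, by omega⟩
  subst haval
  push_cast [Nat.add_sub_cancel] at h4 h5
  -- h5 : c₂ + l * c₃ = (Q+1)*l - 1
  have hc3 : c₃ ≤ (Q : ℤ) := by
    by_contra hc
    push_neg at hc
    have : (Q : ℤ) + 1 ≤ c₃ := hc
    nlinarith [Int.natCast_pos.2 (by omega : 0 < l)]
  have hhpos : (0 : ℤ) < (h : ℤ) := by exact_mod_cast hh
  nlinarith
end

section
/- Let a, l, h, q, r be positive integers with a = q*l + r, 0 ≤ r < l, l ≥ 2, l dividing h. Then with (m₀, n₀) = (q*h + 1, 1), there are no nonnegative integers c₁, c₂, c₃ satisfying c₁ - h*c₃ = -m₀ and c₂ + l*c₃ = a - n₀. -/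
theorem stmt_16 (a l h q : ℕ) (r : ℕ) (ha : 0 < a) (hl : 2 ≤ l) (hh : 0 < h)
    (hq : 0 < q) (hr : r < l) (haval : a = q * l + r) (hdvd : l ∣ h) :
    ¬ ∃ c₁ c₂ c₃ : ℤ, 0 ≤ c₁ ∧ 0 ≤ c₂ ∧ 0 ≤ c₃ ∧
      c₁ - h * c₃ = -((q * h + 1 : ℕ) : ℤ) ∧
      c₂ + l * c₃ = (a : ℤ) - 1 := by
  rintro ⟨c₁, c₂, c₃, h1, h2, h3, h4, h5⟩
  push_cast at h4 h5
  have hhz : (0:ℤ) < h := by exact_mod_cast hh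
  have hc3 : (q:ℤ)+1 ≤ c₃ := by
    by_contra hc
    push_neg at hc
    have : c₃ ≤ (q:ℤ) := by omega
    nlinarith
  have hA : (a:ℤ) = q * l + r := by exact_mod_cast haval
  have hrz : (r:ℤ) < l := by exact_mod_cast hr
  nlinarith
end

section
/- Let a ≥ 3 be a positive integer, h ≥ 1, d ≥ 1 integers, with gcd(a, d) = 1. Set b = h*a + d and c = h*a + 2*d, and K = h*⌊(a-1)/2⌋. Then the Frobenius number satisfies g(a, b, c) = a*b - a*(K+1) - b, i.e., a*b - a*(K+1) - b is not representable as a nonnegative integer combination of a, b, c, while every larger integer is. -/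
/-!
Write `b = h a + d`, `c = h a + 2 d` and `V = a b - a (h ⌊(a-1)/2⌋ + 1) - b`, so that
`V + a = h a ⌊a/2⌋ + d (a - 1)`. Since `y b + z c = a h (y + z) + d (y + 2 z)`, for each residue
`d t` (`0 ≤ t < a`) modulo `a` the choice `y + 2 z = t`, `y + z = ⌈t/2⌉` gives a combination of `b`
and `c` in that class of size at most `V + a`; every `n > V` is that combination plus a multiple of
`a`. Conversely a representation of `V` forces `y + 2 z ≡ a - 1 (mod a)`, hence `y + z ≥ ⌊a/2⌋`,
and then the sum is at least `V + a + a`.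
-/

namespace Nat

theorem exists_eq_mul_add_iff {a n w : ℕ} : (∃ x, n = a * x + w) ↔ w ≤ n ∧ w ≡ n [MOD a] := by
  constructor
  · rintro ⟨x, rfl⟩
    refine ⟨Nat.le_add_left w (a * x), ?_⟩
    simp [Nat.ModEq]
  · rintro ⟨hle, hmod⟩
    obtain ⟨x, hx⟩ := (Nat.modEq_iff_dvd' hle).mp hmod
    exact ⟨x, by omega⟩

end Nat

section ArithmeticTriple

variable {a h d : ℕ}

theorem arithmeticTriple_comb_eq (y z : ℕ) :
    (h * a + d) * y + (h * a + 2 * d) * z = a * (h * (y + z)) + d * (y + 2 * z) := by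
  ring

theorem frobeniusCandidate_add_eq (ha : 2 ≤ a) (hh : 1 ≤ h) :
    a * (h * a + d) - a * (h * ((a - 1) / 2) + 1) - (h * a + d) + a
      = h * a * (a / 2) + d * (a - 1) := by
  obtain ⟨k, r, hk, hr, hkr⟩ : ∃ k r, (a - 1) / 2 = k ∧ a / 2 = r ∧ a - 1 = k + r :=
    ⟨_, _, rfl, rfl, by omega⟩
  rw [hk, hr, hkr]
  have hsum :
      a * (h * a + d) + a = a * (h * k + 1) + (h * a * r + d * (k + r)) + (h * a + d) := by
    rw [show a = k + r + 1 by omega]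
    ring
  have hle : a ≤ h * a * r :=
    calc a = 1 * a * 1 := by ring
      _ ≤ h * a * r := Nat.mul_le_mul (Nat.mul_le_mul_right a hh) (by omega)
  omega

theorem not_exists_eq_arithmeticTriple_comb (ha : 0 < a) (hgcd : Nat.gcd a d = 1) {V : ℕ}
    (hV : V + a = h * a * (a / 2) + d * (a - 1)) :
    ¬ ∃ x y z : ℕ, V = a * x + (h * a + d) * y + (h * a + 2 * d) * z := by
  rintro ⟨x, y, z, rfl⟩
  have hsum : a * (x + 1 + h * (y + z)) + d * (y + 2 * z) = a * (h * (a / 2)) + d * (a - 1) := by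
    linarith [arithmeticTriple_comb_eq (a := a) (h := h) (d := d) y z]
  have hmod : d * (y + 2 * z) ≡ d * (a - 1) [MOD a] := by
    simpa [Nat.ModEq, Nat.mul_add_mod] using congrArg (· % a) hsum
  have hpred : a - 1 ≤ y + 2 * z :=
    (Nat.ModEq.cancel_left_of_coprime hgcd hmod).symm.le_of_lt_add (by omega)
  have hhalf : h * a * (a / 2) ≤ a * (h * (y + z)) := by
    rw [show a * (h * (y + z)) = h * a * (y + z) by ring]
    exact Nat.mul_le_mul_left _ (by omega)
  have hlin : d * (a - 1) ≤ d * (y + 2 * z) := Nat.mul_le_mul_left _ hpred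
  nlinarith

theorem exists_eq_arithmeticTriple_comb (ha : 0 < a) (hgcd : Nat.gcd a d = 1) {n : ℕ}
    (hn : h * a * (a / 2) + d * (a - 1) < n + a) :
    ∃ x y z : ℕ, n = a * x + (h * a + d) * y + (h * a + 2 * d) * z := by
  obtain ⟨t, hta, hdt⟩ := Nat.exists_mul_mod_eq_of_coprime n (Nat.Coprime.symm hgcd) ha.ne'
  have hW : (h * a + d) * (t % 2) + (h * a + 2 * d) * (t / 2)
      = a * (h * (t % 2 + t / 2)) + d * t := by
    rw [arithmeticTriple_comb_eq, show t % 2 + 2 * (t / 2) = t by omega]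
  have hWmod : (h * a + d) * (t % 2) + (h * a + 2 * d) * (t / 2) ≡ n [MOD a] := by
    rw [hW]
    simpa [Nat.ModEq, Nat.mul_add_mod] using hdt
  have hWle : (h * a + d) * (t % 2) + (h * a + 2 * d) * (t / 2) < n + a := by
    refine lt_of_le_of_lt ?_ hn
    rw [hW, show a * (h * (t % 2 + t / 2)) = h * a * (t % 2 + t / 2) by ring]
    exact Nat.add_le_add (Nat.mul_le_mul_left _ (by omega)) (Nat.mul_le_mul_left _ (by omega))
  obtain ⟨x, hx⟩ := Nat.exists_eq_mul_add_iff.mpr ⟨hWmod.le_of_lt_add hWle, hWmod⟩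
  exact ⟨x, t % 2, t / 2, by rw [hx, add_assoc]⟩

end ArithmeticTriple

theorem stmt_18_general (a h d : ℕ) (ha : 3 ≤ a) (hh : 1 ≤ h)
    (hgcd : Nat.gcd a d = 1) :
    IsGreatest {n : ℕ | ¬ ∃ x y z : ℕ,
        n = a * x + (h * a + d) * y + (h * a + 2 * d) * z}
      (a * (h * a + d) - a * (h * ((a - 1) / 2) + 1) - (h * a + d)) := by
  have hV := frobeniusCandidate_add_eq (d := d) (by omega : 2 ≤ a) hh
  refine ⟨not_exists_eq_arithmeticTriple_comb (by omega) hgcd hV, fun n hn => ?_⟩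
  by_contra! hlt
  exact hn (exists_eq_arithmeticTriple_comb (by omega) hgcd (by omega))

theorem stmt_18 (a h d : ℕ) (ha : 3 ≤ a) (hh : 1 ≤ h) (hd : 1 ≤ d)
    (hgcd : Nat.gcd a d = 1) :
    IsGreatest {n : ℕ | ¬ ∃ x y z : ℕ,
        n = a * x + (h * a + d) * y + (h * a + 2 * d) * z}
      (a * (h * a + d) - a * (h * ((a - 1) / 2) + 1) - (h * a + d)) :=
  stmt_18_general a h d ha hh hgcd
end
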